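/- Let λ > 0, let ν be a compactly supported Borel probability measure on ℝ^m, let c : ℝ^d × ℝ^m → ℝ be continuously differentiable, and let ψ : ℝ^m → ℝ be bounded and Borel measurable. Then the function ψ^{c,λ}(x) = −λ · log ∫ exp((ψ(y) − c(x, y))/λ) dν(y) is continuously differentiable on ℝ^d, with gradient ∇ψ^{c,λ}(x) = [∫ exp((ψ(y) − c(x, y))/λ) · ∇_x c(x, y) dν(y)] / [∫ exp((ψ(y) − c(x, y))/λ) dν(y)]. -/

import Mathlib

/-!
Write `g(x, y) = exp ((ψ y - c (x, y)) / λ)`. For `x` near a point `x₀` and `y` in the compact set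
`K` carrying `ν`, both `g` and its `x`-derivative `-λ⁻¹ g(x, y) ∂ₓc(x, y)` are bounded: `ψ` is
bounded, and the continuous functions `c` and `∂ₓc`, bounded on `{x₀} × K`, stay bounded on a tube
`U × K` around it. Dominated convergence then allows differentiation under the integral sign and
makes the differentiated integral continuous, so `Z(x) = ∫ g(x, y) dν` is a positive `C¹`
function, and the chain rule for `-λ log Z` gives the gradient formula.
-/

open MeasureTheory Filter Topology

section ParametricIntegral

variable {α E G : Type*} [MeasurableSpace α] {μ : Measure α}
  [NormedAddCommGroup G] [NormedSpace ℝ G]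

theorem continuous_integral_of_locally_bounded {X : Type*} [TopologicalSpace X]
    [FirstCountableTopology X] [IsFiniteMeasure μ] {f : X → α → G}
    (hf_meas : ∀ x, AEStronglyMeasurable (f x) μ) (hf_cont : ∀ᵐ y ∂μ, Continuous (f · y))
    (hf_bdd : ∀ x₀, ∃ U ∈ 𝓝 x₀, ∃ M, ∀ᵐ y ∂μ, ∀ x ∈ U, ‖f x y‖ ≤ M) :
    Continuous fun x => ∫ y, f x y ∂μ := by
  refine continuous_iff_continuousAt.mpr fun x₀ => ?_
  obtain ⟨U, hU, M, hM⟩ := hf_bdd x₀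
  refine continuousAt_of_dominated (.of_forall hf_meas) ?_ (integrable_const M)
    (hf_cont.mono fun y hy => hy.continuousAt)
  filter_upwards [hU] with x hx
  filter_upwards [hM] with y hy using hy x hx

variable [NormedAddCommGroup E] [NormedSpace ℝ E] {F : E → α → G} {F' : E → α → E →L[ℝ] G}

theorem hasFDerivAt_integral_of_locally_bounded_fderiv [IsFiniteMeasure μ]
    (hF_int : ∀ x, Integrable (F x) μ) (hF'_meas : ∀ x, AEStronglyMeasurable (F' x) μ)
    (hF : ∀ᵐ y ∂μ, ∀ x, HasFDerivAt (F · y) (F' x y) x)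
    (hF'_bdd : ∀ x₀, ∃ U ∈ 𝓝 x₀, ∃ M, ∀ᵐ y ∂μ, ∀ x ∈ U, ‖F' x y‖ ≤ M) (x₀ : E) :
    HasFDerivAt (fun x => ∫ y, F x y ∂μ) (∫ y, F' x₀ y ∂μ) x₀ := by
  obtain ⟨U, hU, M, hM⟩ := hF'_bdd x₀
  exact hasFDerivAt_integral_of_dominated_of_fderiv_le hU
    (.of_forall fun x => (hF_int x).aestronglyMeasurable) (hF_int x₀) (hF'_meas x₀) hM
    (integrable_const M) (hF.mono fun y hy x _ => hy x)

theorem contDiff_one_integral_of_locally_bounded_fderiv [IsFiniteMeasure μ]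
    (hF_int : ∀ x, Integrable (F x) μ) (hF'_meas : ∀ x, AEStronglyMeasurable (F' x) μ)
    (hF : ∀ᵐ y ∂μ, ∀ x, HasFDerivAt (F · y) (F' x y) x)
    (hF'_cont : ∀ᵐ y ∂μ, Continuous (F' · y))
    (hF'_bdd : ∀ x₀, ∃ U ∈ 𝓝 x₀, ∃ M, ∀ᵐ y ∂μ, ∀ x ∈ U, ‖F' x y‖ ≤ M) :
    ContDiff ℝ 1 fun x => ∫ y, F x y ∂μ := by
  have hderiv := hasFDerivAt_integral_of_locally_bounded_fderiv hF_int hF'_meas hF hF'_bdd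
  rw [contDiff_one_iff_fderiv, funext fun x => (hderiv x).fderiv]
  exact ⟨fun x => (hderiv x).differentiableAt,
    continuous_integral_of_locally_bounded hF'_meas hF'_cont hF'_bdd⟩

end ParametricIntegral

theorem IsCompact.exists_mem_nhds_forall_norm_le {X Y G : Type*} [TopologicalSpace X]
    [TopologicalSpace Y] [SeminormedAddCommGroup G] {K : Set Y} (hK : IsCompact K)
    {f : X × Y → G} (hf : Continuous f) (x₀ : X) :
    ∃ U ∈ 𝓝 x₀, ∃ M, ∀ x ∈ U, ∀ y ∈ K, ‖f (x, y)‖ ≤ M := by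
  obtain ⟨C, hC⟩ := hK.exists_bound_of_continuousOn (f := fun y => f (x₀, y))
    (by fun_prop : Continuous fun y => f (x₀, y)).continuousOn
  refine ⟨_, hK.eventually_forall_of_forall_eventually
    (P := fun x y => ‖f (x, y)‖ < C + 1) fun y hy => ?_, C + 1,
    fun x hx y hy => (hx y hy).le⟩
  exact hf.norm.continuousAt.eventually (gt_mem_nhds ((hC y hy).trans_lt (lt_add_one C)))

section PartialFDeriv

variable {E Y : Type*} [NormedAddCommGroup E] [NormedSpace ℝ E]
  [NormedAddCommGroup Y] [NormedSpace ℝ Y] {c : E × Y → ℝ}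

theorem HasFDerivAt.partial_fst {x : E} {y : Y} (hc : DifferentiableAt ℝ c (x, y)) :
    HasFDerivAt (fun x' => c (x', y)) ((fderiv ℝ c (x, y)).comp (.inl ℝ E Y)) x :=
  hc.hasFDerivAt.comp x (hasFDerivAt_prodMk_left x y)

theorem ContDiff.continuous_fderiv_partial_fst (hc : ContDiff ℝ 1 c) :
    Continuous fun p : E × Y => fderiv ℝ (fun x => c (x, p.2)) p.1 := by
  have hdiff := hc.differentiable one_ne_zero
  simp_rw [fun p : E × Y => (HasFDerivAt.partial_fst (hdiff p)).fderiv]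
  exact (hc.continuous_fderiv one_ne_zero).clm_comp continuous_const

end PartialFDeriv

section GibbsWeight

variable {E Y : Type*} {lam : ℝ} {c : E × Y → ℝ} {ψ : Y → ℝ} {Mψ : ℝ} {K : Set Y}

noncomputable def gibbsWeight (lam : ℝ) (c : E × Y → ℝ) (ψ : Y → ℝ) (x : E) (y : Y) : ℝ :=
  Real.exp ((ψ y - c (x, y)) / lam)

theorem gibbsWeight_pos (x : E) (y : Y) : 0 < gibbsWeight lam c ψ x y :=
  Real.exp_pos _

theorem gibbsWeight_le (hψ : ∀ y, |ψ y| ≤ Mψ) {x : E} {y : Y} {Mc : ℝ} (hc : |c (x, y)| ≤ Mc) :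
    gibbsWeight lam c ψ x y ≤ Real.exp ((Mψ + Mc) / |lam|) := by
  refine Real.exp_le_exp.mpr ((le_abs_self _).trans ?_)
  rw [abs_div]
  gcongr
  exact (abs_sub _ _).trans (add_le_add (hψ y) hc)

section Topological

variable [TopologicalSpace E] [TopologicalSpace Y]

theorem IsCompact.exists_mem_nhds_gibbsWeight_le
    (hK : IsCompact K) (hc : Continuous c) (hψ : ∀ y, |ψ y| ≤ Mψ) (x₀ : E) :
    ∃ U ∈ 𝓝 x₀, ∃ M, ∀ x ∈ U, ∀ y ∈ K, gibbsWeight lam c ψ x y ≤ M := by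
  obtain ⟨U, hU, Mc, hMc⟩ := hK.exists_mem_nhds_forall_norm_le hc x₀
  exact ⟨U, hU, _, fun x hx y hy => gibbsWeight_le hψ (hMc x hx y hy)⟩

variable [MeasurableSpace Y] [OpensMeasurableSpace Y] {ν : Measure Y}

theorem measurable_gibbsWeight (hψ : Measurable ψ) (hc : Continuous c) (x : E) :
    Measurable (gibbsWeight lam c ψ x) := by
  have hcx : Measurable fun y => c (x, y) := (hc.comp (Continuous.prodMk_right x)).measurable
  exact Real.measurable_exp.comp ((hψ.sub hcx).div_const lam)

theorem integrable_gibbsWeight [IsFiniteMeasure ν] (hK : IsCompact K) (hKν : ∀ᵐ y ∂ν, y ∈ K)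
    (hψm : Measurable ψ) (hψ : ∀ y, |ψ y| ≤ Mψ) (hc : Continuous c) (x : E) :
    Integrable (gibbsWeight lam c ψ x) ν := by
  obtain ⟨U, hU, M, hM⟩ := hK.exists_mem_nhds_gibbsWeight_le (lam := lam) hc hψ x
  refine (integrable_const M).mono' (measurable_gibbsWeight hψm hc x).aestronglyMeasurable ?_
  filter_upwards [hKν] with y hy
  rw [Real.norm_of_nonneg (gibbsWeight_pos x y).le]
  exact hM x (mem_of_mem_nhds hU) y hy

theorem integral_gibbsWeight_pos [IsFiniteMeasure ν] [NeZero ν] (hK : IsCompact K)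
    (hKν : ∀ᵐ y ∂ν, y ∈ K) (hψm : Measurable ψ) (hψ : ∀ y, |ψ y| ≤ Mψ) (hc : Continuous c) (x : E) :
    0 < ∫ y, gibbsWeight lam c ψ x y ∂ν :=
  integral_exp_pos (integrable_gibbsWeight hK hKν hψm hψ hc x)

end Topological

variable [NormedAddCommGroup E] [NormedSpace ℝ E] [NormedAddCommGroup Y] [NormedSpace ℝ Y]

theorem hasFDerivAt_gibbsWeight (hc : Differentiable ℝ c) (x : E) (y : Y) :
    HasFDerivAt (gibbsWeight lam c ψ · y)
      (-lam⁻¹ • gibbsWeight lam c ψ x y • fderiv ℝ (fun x' => c (x', y)) x) x := by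
  have hcy := (HasFDerivAt.partial_fst (hc (x, y))).differentiableAt.hasFDerivAt
  convert ((hcy.const_sub (ψ y)).mul_const lam⁻¹).exp using 1
  · simp only [gibbsWeight, div_eq_mul_inv]
  · ext v
    simp only [gibbsWeight, div_eq_mul_inv, neg_smul, neg_apply, smul_apply, smul_eq_mul,
      smul_neg, neg_inj]
    ring

variable [MeasurableSpace Y] {ν : Measure Y}

theorem IsCompact.exists_mem_nhds_norm_fderiv_gibbsWeight_le (hK : IsCompact K)
    (hKν : ∀ᵐ y ∂ν, y ∈ K) (hψ : ∀ y, |ψ y| ≤ Mψ) (hc : ContDiff ℝ 1 c) (x₀ : E) :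
    ∃ U ∈ 𝓝 x₀, ∃ M, ∀ᵐ y ∂ν, ∀ x ∈ U,
      ‖-lam⁻¹ • gibbsWeight lam c ψ x y • fderiv ℝ (fun x' => c (x', y)) x‖ ≤ M := by
  obtain ⟨U₁, hU₁, Mg, hMg⟩ := hK.exists_mem_nhds_gibbsWeight_le (lam := lam) hc.continuous hψ x₀
  obtain ⟨U₂, hU₂, MD, hMD⟩ :=
    hK.exists_mem_nhds_forall_norm_le hc.continuous_fderiv_partial_fst x₀
  refine ⟨U₁ ∩ U₂, inter_mem hU₁ hU₂, |lam⁻¹| * (Mg * MD), ?_⟩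
  filter_upwards [hKν] with y hy x ⟨hx₁, hx₂⟩
  have hg_pos := gibbsWeight_pos (lam := lam) (c := c) (ψ := ψ) x y
  rw [norm_smul, norm_smul, norm_neg, Real.norm_of_nonneg hg_pos.le, Real.norm_eq_abs]
  gcongr
  · exact hg_pos.le.trans (hMg x hx₁ y hy)
  · exact hMg x hx₁ y hy
  · exact hMD x hx₂ y hy

theorem aestronglyMeasurable_fderiv_gibbsWeight [OpensMeasurableSpace Y]
    [SecondCountableTopology Y] (hψm : Measurable ψ) (hc : ContDiff ℝ 1 c) (x : E) :
    AEStronglyMeasurable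
      (fun y => -lam⁻¹ • gibbsWeight lam c ψ x y • fderiv ℝ (fun x' => c (x', y)) x) ν := by
  have hg := (measurable_gibbsWeight (lam := lam) hψm hc.continuous x).aestronglyMeasurable (μ := ν)
  have hD : Continuous fun y => fderiv ℝ (fun x' => c (x', y)) x :=
    hc.continuous_fderiv_partial_fst.comp (Continuous.prodMk_right x)
  exact (hg.smul hD.aestronglyMeasurable).const_smul (-lam⁻¹)

end GibbsWeight

section CLambdaTransform

noncomputable def cLambdaTransform {E Y : Type*} [MeasurableSpace Y] (lam : ℝ) (c : E × Y → ℝ)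
    (ψ : Y → ℝ) (ν : Measure Y) (x : E) : ℝ :=
  -lam * Real.log (∫ y, gibbsWeight lam c ψ x y ∂ν)

variable {E Y : Type*} [NormedAddCommGroup Y] [NormedSpace ℝ Y] [MeasurableSpace Y]
  [OpensMeasurableSpace Y] [SecondCountableTopology Y] {lam Mψ : ℝ} {ψ : Y → ℝ} {K : Set Y}
  {ν : Measure Y} [IsFiniteMeasure ν]

section NormedSpace

variable [NormedAddCommGroup E] [NormedSpace ℝ E] {c : E × Y → ℝ}

theorem hasFDerivAt_integral_gibbsWeight (hK : IsCompact K) (hKν : ∀ᵐ y ∂ν, y ∈ K)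
    (hψm : Measurable ψ) (hψ : ∀ y, |ψ y| ≤ Mψ) (hc : ContDiff ℝ 1 c) (x : E) :
    HasFDerivAt (fun x => ∫ y, gibbsWeight lam c ψ x y ∂ν)
      (∫ y, -lam⁻¹ • gibbsWeight lam c ψ x y • fderiv ℝ (fun x' => c (x', y)) x ∂ν) x :=
  hasFDerivAt_integral_of_locally_bounded_fderiv
    (integrable_gibbsWeight hK hKν hψm hψ hc.continuous)
    (aestronglyMeasurable_fderiv_gibbsWeight hψm hc)
    (.of_forall fun y x => hasFDerivAt_gibbsWeight (hc.differentiable one_ne_zero) x y)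
    (hK.exists_mem_nhds_norm_fderiv_gibbsWeight_le hKν hψ hc) x

theorem contDiff_integral_gibbsWeight (hK : IsCompact K) (hKν : ∀ᵐ y ∂ν, y ∈ K)
    (hψm : Measurable ψ) (hψ : ∀ y, |ψ y| ≤ Mψ) (hc : ContDiff ℝ 1 c) :
    ContDiff ℝ 1 fun x => ∫ y, gibbsWeight lam c ψ x y ∂ν := by
  have hg_cont (y : Y) : Continuous (gibbsWeight lam c ψ · y) := continuous_iff_continuousAt.2
    fun x => (hasFDerivAt_gibbsWeight (hc.differentiable one_ne_zero) x y).continuousAt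
  have hD_cont (y : Y) : Continuous fun x => fderiv ℝ (fun x' => c (x', y)) x :=
    hc.continuous_fderiv_partial_fst.comp (continuous_id.prodMk continuous_const)
  exact contDiff_one_integral_of_locally_bounded_fderiv
    (integrable_gibbsWeight hK hKν hψm hψ hc.continuous)
    (aestronglyMeasurable_fderiv_gibbsWeight hψm hc)
    (.of_forall fun y x => hasFDerivAt_gibbsWeight (hc.differentiable one_ne_zero) x y)
    (.of_forall fun y => ((hg_cont y).smul (hD_cont y)).const_smul (-lam⁻¹))
    (hK.exists_mem_nhds_norm_fderiv_gibbsWeight_le hKν hψ hc)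

theorem contDiff_cLambdaTransform [NeZero ν] (hK : IsCompact K) (hKν : ∀ᵐ y ∂ν, y ∈ K)
    (hψm : Measurable ψ) (hψ : ∀ y, |ψ y| ≤ Mψ) (hc : ContDiff ℝ 1 c) :
    ContDiff ℝ 1 (cLambdaTransform lam c ψ ν) :=
  contDiff_const.mul <| (contDiff_integral_gibbsWeight hK hKν hψm hψ hc).log
    fun x => (integral_gibbsWeight_pos hK hKν hψm hψ hc.continuous x).ne'

end NormedSpace

theorem hasGradientAt_cLambdaTransform [NormedAddCommGroup E] [InnerProductSpace ℝ E]
    [CompleteSpace E] [NeZero ν] {c : E × Y → ℝ} (hlam : lam ≠ 0) (hK : IsCompact K)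
    (hKν : ∀ᵐ y ∂ν, y ∈ K) (hψm : Measurable ψ) (hψ : ∀ y, |ψ y| ≤ Mψ) (hc : ContDiff ℝ 1 c)
    (x : E) :
    HasGradientAt (cLambdaTransform lam c ψ ν)
      ((∫ y, gibbsWeight lam c ψ x y ∂ν)⁻¹ •
        ∫ y, gibbsWeight lam c ψ x y • gradient (fun x' => c (x', y)) x ∂ν) x := by
  have hZ := (hasFDerivAt_integral_gibbsWeight (lam := lam) hK hKν hψm hψ hc x).log
    (integral_gibbsWeight_pos hK hKν hψm hψ hc.continuous x).ne'
  rw [hasGradientAt_iff_hasFDerivAt]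
  refine (hZ.const_mul (-lam)).congr_fderiv ?_
  have hcomm := (InnerProductSpace.toDual ℝ E).toLinearIsometry.integral_comp_comm (μ := ν)
    fun y => gibbsWeight lam c ψ x y • gradient (fun x' => c (x', y)) x
  simp only [LinearIsometryEquiv.coe_toLinearIsometry, map_smul, toDual_gradient] at hcomm
  rw [map_smul, ← hcomm, integral_smul, smul_comm (-lam), smul_smul (-lam), neg_mul_neg, mul_inv_cancel₀ hlam, one_smul]

end CLambdaTransform

/-- For `λ > 0`, a compactly supported Borel probability measure `ν` on `ℝ^m`, a `C¹`
cost `c : ℝ^d × ℝ^m → ℝ`, and a bounded Borel measurable `ψ : ℝ^m → ℝ`, the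
`(c,λ)`-transform `ψ^{c,λ}(x) = -λ log ∫ exp((ψ(y) - c(x,y))/λ) dν(y)` is `C¹`, with
gradient the `ν`-weighted softmin average of `∇_x c(x, y)`. -/
theorem cLambda_transform_contDiff_gradient {d m : ℕ}
    (lam : ℝ) (hlam : 0 < lam)
    (ν : Measure (EuclideanSpace ℝ (Fin m))) [IsProbabilityMeasure ν]
    (hν : ∃ K : Set (EuclideanSpace ℝ (Fin m)), IsCompact K ∧ ν Kᶜ = 0)
    (c : EuclideanSpace ℝ (Fin d) × EuclideanSpace ℝ (Fin m) → ℝ)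
    (hc : ContDiff ℝ 1 c)
    (ψ : EuclideanSpace ℝ (Fin m) → ℝ)
    (Mψ : ℝ) (hψb : ∀ y, |ψ y| ≤ Mψ) (hψm : Measurable ψ) :
    ContDiff ℝ 1 (fun x : EuclideanSpace ℝ (Fin d) =>
      -lam * Real.log (∫ y, Real.exp ((ψ y - c (x, y)) / lam) ∂ν)) ∧
    ∀ x : EuclideanSpace ℝ (Fin d),
      gradient (fun x' : EuclideanSpace ℝ (Fin d) =>
          -lam * Real.log (∫ y, Real.exp ((ψ y - c (x', y)) / lam) ∂ν)) x =
        (∫ y, Real.exp ((ψ y - c (x, y)) / lam) ∂ν)⁻¹ •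
          ∫ y, Real.exp ((ψ y - c (x, y)) / lam) •
            gradient (fun x' : EuclideanSpace ℝ (Fin d) => c (x', y)) x ∂ν := by
  obtain ⟨K, hK, hKν⟩ := hν
  have hK_ae : ∀ᵐ y ∂ν, y ∈ K := mem_ae_iff.mpr hKν
  exact ⟨contDiff_cLambdaTransform hK hK_ae hψm hψb hc,
    fun x => (hasGradientAt_cLambdaTransform hlam.ne' hK hK_ae hψm hψb hc x).gradient⟩
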